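/- Let $P$ be a poset and $F \subseteq P^P$. If a net $(x_\gamma)_{\gamma\in\Gamma}$ in $P$ $FO_2$-converges to $x \in P$ (i.e., $(f(x_\gamma))$ $O_2$-converges to $f(x)$ for every $f \in F$), then $(x_\gamma)$ has a subnet that $FO_1$-converges to $x$ (i.e., $(f$ of the subnet$)$ $O_1$-converges to $f(x)$ for every $f \in F$). -/

import Mathlib

/-- Eventually, for nets indexed by a preordered set. -/
def EvAtTop {Γ : Type*} [Preorder Γ] (p : Γ → Prop) : Prop :=
  ∃ γ₀, ∀ γ, γ₀ ≤ γ → p γ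

/-- $O_1$-convergence of a net to a point in a poset. -/
def O1Conv {P : Type*} {Γ : Type*} [PartialOrder P] [Preorder Γ]
    (x : Γ → P) (l : P) : Prop :=
  ∃ y z : Γ → P, Monotone y ∧ Antitone z ∧
    IsLUB (Set.range y) l ∧ IsGLB (Set.range z) l ∧
    EvAtTop (fun γ => y γ ≤ x γ ∧ x γ ≤ z γ)

/-- $O_2$-convergence of a net to a point in a poset. -/
def O2Conv {P : Type*} {Γ : Type*} [PartialOrder P] [Preorder Γ]
    (x : Γ → P) (l : P) : Prop :=
  ∃ M N : Set P, M.Nonempty ∧ DirectedOn (· ≤ ·) M ∧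
    N.Nonempty ∧ DirectedOn (· ≥ ·) N ∧
    IsLUB M l ∧ IsGLB N l ∧
    ∀ m ∈ M, ∀ n ∈ N, EvAtTop (fun γ => m ≤ x γ ∧ x γ ≤ n)


/-- A bundled nonempty directed preordered index type (for subnets). -/
structure DirectedIndex : Type (u + 1) where
  carrier : Type u
  [pre : Preorder carrier]
  [nonempty : Nonempty carrier]
  [directed : IsDirected carrier (· ≤ ·)]

attribute [instance] DirectedIndex.pre DirectedIndex.nonempty DirectedIndex.directed

universe u v

/-!
It suffices to treat a family of nets `u i` (here `f ∘ x` for `f ∈ F`), each $O_2$-converging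
to `l i` with witnesses `M i` and `N i`. The subnet is indexed by tuples `(γ, m, n, S)`: an index
`γ` of the original net, bounds `m i ∈ M i` and `n i ∈ N i` for every `i`, and a finite set `S`
of coordinates at which `m i ≤ u i γ ≤ n i`. Ordered componentwise (bounds moving inwards, `S`
growing), these tuples form a directed set: two of them are dominated by pushing the bounds
inwards, using directedness of `M i` and `N i`, and then taking `γ` late enough for the finitely
many squeezes required. Along this directed set the bounds are monotone nets whose ranges are
exactly `M i` and `N i`, so they witness $O_1$-convergence of `u i ∘ γ`.
-/

open Filter

universe w

theorem evAtTop_iff_eventually {Γ : Type*} [Preorder Γ] [Nonempty Γ] [IsDirected Γ (· ≤ ·)]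
    {p : Γ → Prop} : EvAtTop p ↔ ∀ᶠ γ in atTop, p γ :=
  eventually_atTop.symm

structure SqueezeIndex {ι P Γ : Type*} [Preorder P] (u : ι → Γ → P) (M N : ι → Set P) where
  idx : Γ
  lower : ι → P
  upper : ι → P
  support : Finset ι
  lower_mem : ∀ i, lower i ∈ M i
  upper_mem : ∀ i, upper i ∈ N i
  squeeze : ∀ i ∈ support, lower i ≤ u i idx ∧ u i idx ≤ upper i

namespace SqueezeIndex

variable {ι P Γ : Type*} [Preorder P] {u : ι → Γ → P} {M N : ι → Set P}

theorem exists_idx_eq (hM : ∀ i, (M i).Nonempty) (hN : ∀ i, (N i).Nonempty) (γ : Γ) :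
    ∃ a : SqueezeIndex u M N, a.idx = γ := by
  choose m hm using hM
  choose n hn using hN
  exact ⟨⟨γ, m, n, ∅, hm, hn, by simp⟩, rfl⟩

theorem exists_lower_upper_eq (hM : ∀ i, (M i).Nonempty) (hN : ∀ i, (N i).Nonempty) [Nonempty Γ]
    {i : ι} {m n : P} (hm : m ∈ M i) (hn : n ∈ N i) :
    ∃ a : SqueezeIndex u M N, a.lower i = m ∧ a.upper i = n := by
  classical
  obtain ⟨a, -⟩ := exists_idx_eq (u := u) hM hN (Classical.arbitrary Γ)
  refine ⟨⟨a.idx, Function.update a.lower i m, Function.update a.upper i n, ∅, ?_, ?_, by simp⟩,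
    by simp, by simp⟩
  · exact (Function.forall_update_iff _ fun j p => p ∈ M j).2 ⟨hm, fun j _ => a.lower_mem j⟩
  · exact (Function.forall_update_iff _ fun j p => p ∈ N j).2 ⟨hn, fun j _ => a.upper_mem j⟩

theorem range_lower (hM : ∀ i, (M i).Nonempty) (hN : ∀ i, (N i).Nonempty) [Nonempty Γ]
    (i : ι) : Set.range (fun a : SqueezeIndex u M N => a.lower i) = M i := by
  refine Set.Subset.antisymm (Set.range_subset_iff.2 fun a => a.lower_mem i) fun m hm => ?_
  obtain ⟨a, ha, -⟩ := exists_lower_upper_eq (u := u) hM hN hm (hN i).some_mem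
  exact ⟨a, ha⟩

theorem range_upper (hM : ∀ i, (M i).Nonempty) (hN : ∀ i, (N i).Nonempty) [Nonempty Γ]
    (i : ι) : Set.range (fun a : SqueezeIndex u M N => a.upper i) = N i := by
  refine Set.Subset.antisymm (Set.range_subset_iff.2 fun a => a.upper_mem i) fun n hn => ?_
  obtain ⟨a, -, ha⟩ := exists_lower_upper_eq (u := u) hM hN (hM i).some_mem hn
  exact ⟨a, ha⟩

variable [Preorder Γ]

instance : Preorder (SqueezeIndex u M N) :=
  Preorder.lift fun a => (a.idx, a.lower, OrderDual.toDual a.upper, a.support)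

theorem le_def {a b : SqueezeIndex u M N} :
    a ≤ b ↔ a.idx ≤ b.idx ∧ a.lower ≤ b.lower ∧ b.upper ≤ a.upper ∧ a.support ⊆ b.support :=
  Iff.rfl

theorem monotone_idx : Monotone (idx : SqueezeIndex u M N → Γ) :=
  fun _ _ h => (le_def.1 h).1

theorem monotone_lower (i : ι) : Monotone fun a : SqueezeIndex u M N => a.lower i :=
  fun _ _ h => (le_def.1 h).2.1 i

theorem antitone_upper (i : ι) : Antitone fun a : SqueezeIndex u M N => a.upper i :=
  fun _ _ h => (le_def.1 h).2.2.1 i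

theorem isDirected [Nonempty Γ] [IsDirected Γ (· ≤ ·)]
    (hMdir : ∀ i, DirectedOn (· ≤ ·) (M i)) (hNdir : ∀ i, DirectedOn (· ≥ ·) (N i))
    (hev : ∀ i, ∀ m ∈ M i, ∀ n ∈ N i, EvAtTop fun γ => m ≤ u i γ ∧ u i γ ≤ n) :
    IsDirected (SqueezeIndex u M N) (· ≤ ·) := by
  classical
  refine ⟨fun a b => ?_⟩
  choose m hm ham hbm using fun i => hMdir i _ (a.lower_mem i) _ (b.lower_mem i)
  choose n hn han hbn using fun i => hNdir i _ (a.upper_mem i) _ (b.upper_mem i)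
  obtain ⟨γ, hγa, hγb, hγS⟩ := ((eventually_ge_atTop a.idx).and <|
    (eventually_ge_atTop b.idx).and <| (a.support ∪ b.support).eventually_all.2
      fun i _ => evAtTop_iff_eventually.1 (hev i _ (hm i) _ (hn i))).exists
  let c : SqueezeIndex u M N := ⟨γ, m, n, a.support ∪ b.support, hm, hn, hγS⟩
  exact ⟨c, ⟨hγa, ham, han, Finset.subset_union_left⟩,
    ⟨hγb, hbm, hbn, Finset.subset_union_right⟩⟩

theorem evAtTop_squeeze (hM : ∀ i, (M i).Nonempty) (hN : ∀ i, (N i).Nonempty) [Nonempty Γ]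
    (hev : ∀ i, ∀ m ∈ M i, ∀ n ∈ N i, EvAtTop fun γ => m ≤ u i γ ∧ u i γ ≤ n) (i : ι) :
    EvAtTop fun a : SqueezeIndex u M N => a.lower i ≤ u i a.idx ∧ u i a.idx ≤ a.upper i := by
  obtain ⟨a, -⟩ := exists_idx_eq (u := u) hM hN (Classical.arbitrary Γ)
  obtain ⟨γ, hγ⟩ := hev i _ (a.lower_mem i) _ (a.upper_mem i)
  refine ⟨⟨γ, a.lower, a.upper, {i}, a.lower_mem, a.upper_mem, ?_⟩, fun b hb => ?_⟩
  · simpa using hγ γ le_rfl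
  · exact b.squeeze i ((le_def.1 hb).2.2.2 (Finset.mem_singleton_self i))

end SqueezeIndex

theorem exists_subnet_forall_o1Conv {ι : Type w} {P : Type u} {Γ : Type v}
    [PartialOrder P] [Preorder Γ] [Nonempty Γ] [IsDirected Γ (· ≤ ·)]
    (u : ι → Γ → P) (l : ι → P) (h : ∀ i, O2Conv (u i) (l i)) :
    ∃ (Λ : DirectedIndex.{max w u v}) (φ : Λ.carrier → Γ),
      Monotone φ ∧ (∀ γ, ∃ lam, γ ≤ φ lam) ∧ ∀ i, O1Conv (u i ∘ φ) (l i) := by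
  choose M N hM hMdir hN hNdir hMl hNl hev using h
  have : Nonempty (SqueezeIndex u M N) :=
    (SqueezeIndex.exists_idx_eq hM hN (Classical.arbitrary Γ)).nonempty
  have := SqueezeIndex.isDirected hMdir hNdir hev
  refine ⟨⟨SqueezeIndex u M N⟩, SqueezeIndex.idx, SqueezeIndex.monotone_idx,
    fun γ => ?_, fun i => ?_⟩
  · obtain ⟨a, ha⟩ := SqueezeIndex.exists_idx_eq (u := u) hM hN γ
    exact ⟨a, ha.ge⟩
  · refine ⟨fun a => a.lower i, fun a => a.upper i, SqueezeIndex.monotone_lower i,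
      SqueezeIndex.antitone_upper i, ?_, ?_, SqueezeIndex.evAtTop_squeeze hM hN hev i⟩
    · rw [SqueezeIndex.range_lower hM hN]
      exact hMl i
    · rw [SqueezeIndex.range_upper hM hN]
      exact hNl i

theorem fo2_subnet_fo1 {P : Type u} {Γ : Type v} [PartialOrder P] [Preorder Γ]
    [Nonempty Γ] [IsDirected Γ (· ≤ ·)]
    (F : Set (P → P)) (x : Γ → P) (l : P)
    (h : ∀ f ∈ F, O2Conv (fun γ => f (x γ)) (f l)) :
    ∃ (Λ : DirectedIndex.{max u v}) (φ : Λ.carrier → Γ),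
      Monotone φ ∧ (∀ γ : Γ, ∃ lam, γ ≤ φ lam) ∧
      ∀ f ∈ F, O1Conv (fun lam => f (x (φ lam))) (f l) := by
  obtain ⟨Λ, φ, hφ, hfinal, hconv⟩ :=
    exists_subnet_forall_o1Conv (fun (f : F) γ => f.1 (x γ)) (fun f => f.1 l) fun f => h f f.2
  exact ⟨Λ, φ, hφ, hfinal, fun f hf => hconv ⟨f, hf⟩⟩
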